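/- arXiv:2102.12646 — 3 statements merged into one kernel-verified Lean document; each statement's English description precedes it below -/
import Mathlib

section
/- With the bipartite construction of G and A: for every index set S ⊆ F ⊕ F, one has [det(A_S) ≠ 0 and S induces a spanning tree of G] if and only if [S contains all right edge indices Sum.inr (i,j) for (i,j) ∈ F, and the set M = {(i,j) ∈ F : Sum.inl (i,j) ∈ S} is a perfect matching, i.e., for every i ∈ Fin n there is exactly one j with (i,j) ∈ M and for every j ∈ Fin n there is exactly one i with (i,j) ∈ M]. -/
/-- The principal minor of `A` on the index set `S` (equal to `1` when `S = ∅`). -/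
noncomputable def principalMinor {ι : Type*} [DecidableEq ι]
    (A : Matrix ι ι ℝ) (S : Finset ι) : ℝ :=
  (A.submatrix (fun i : ↥S => (i : ι)) (fun i : ↥S => (i : ι))).det

/-- The edge of the graph `G` associated with an edge index in `F ⊕ F`:
the left edge `{u_i, u_i w_j}` and the right edge `{u_i w_j, u_{i+1}}`. -/
def bipEdge {n : ℕ} (F : Finset (Fin n × Fin n)) :
    (↥F ⊕ ↥F) → Sym2 (Fin (n + 1) ⊕ ↥F)
  | Sum.inl e => s(Sum.inl (e : Fin n × Fin n).1.castSucc, Sum.inr e)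
  | Sum.inr e => s(Sum.inr e, Sum.inl (e : Fin n × Fin n).1.succ)

/-- The spanning subgraph of `G` whose edges are those indexed by `S ⊆ F ⊕ F`. -/
def bipSubgraph {n : ℕ} (F : Finset (Fin n × Fin n)) (S : Finset (↥F ⊕ ↥F)) :
    SimpleGraph (Fin (n + 1) ⊕ ↥F) :=
  SimpleGraph.fromEdgeSet (bipEdge F '' ↑S)

/-- The matrix `A` of the construction: the left-left block records equality of the
second coordinates, the right-right block is the identity, the off-diagonal blocks vanish. -/
def bipMatrix {n : ℕ} (F : Finset (Fin n × Fin n)) : Matrix (↥F ⊕ ↥F) (↥F ⊕ ↥F) ℝ :=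
  Matrix.of fun p q =>
    match p, q with
    | Sum.inl e₁, Sum.inl e₂ =>
        if (e₁ : Fin n × Fin n).2 = (e₂ : Fin n × Fin n).2 then 1 else 0
    | Sum.inr e, Sum.inr e' => if e = e' then 1 else 0
    | _, _ => 0

/-
The graph is a chain of layers `u_0, …, u_n`, each pair `e = (i, j) ∈ F` contributing a path
`u_i – w_e – u_{i+1}`. The minor `det A_S` is `1` when the chosen left edges have pairwise distinct
second coordinates `j`, and `0` otherwise (two equal rows). A spanning tree has `n + |F|` edges;
distinct `j`'s allow at most `n` left edges, so every right edge and exactly `n` left edges are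
chosen. Connectivity forces a left edge in every layer `i` (otherwise nothing crosses between
`u_i` and `u_{i+1}`), so by counting both coordinates of the chosen left edges are bijective.
Conversely, a perfect matching together with all right edges gives a connected graph with the edge
count of a tree.
-/

open Function

theorem bijective_fst_iff_existsUnique {α β : Type*} (M : Finset (α × β)) :
    Bijective (fun p : M => p.1.1) ↔ ∀ a, ∃! b, (a, b) ∈ M := by
  refine ⟨fun ⟨hinj, hsurj⟩ a => ?_, fun h => ⟨?_, ?_⟩⟩
  · obtain ⟨⟨⟨a, b⟩, hab⟩, rfl⟩ := hsurj a
    refine ⟨b, hab, fun b' hb' => ?_⟩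
    simpa using hinj (a₁ := ⟨_, hb'⟩) (a₂ := ⟨_, hab⟩) rfl
  · rintro ⟨⟨a, b⟩, hab⟩ ⟨⟨a', b'⟩, hab'⟩ (rfl : a = a')
    simp [(h a).unique hab hab']
  · intro a
    obtain ⟨b, hb, -⟩ := h a
    exact ⟨⟨_, hb⟩, rfl⟩

theorem bijective_snd_iff_existsUnique {α β : Type*} (M : Finset (α × β)) :
    Bijective (fun p : M => p.1.2) ↔ ∀ b, ∃! a, (a, b) ∈ M := by
  refine ⟨fun ⟨hinj, hsurj⟩ b => ?_, fun h => ⟨?_, ?_⟩⟩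
  · obtain ⟨⟨⟨a, b⟩, hab⟩, rfl⟩ := hsurj b
    refine ⟨a, hab, fun a' ha' => ?_⟩
    simpa using hinj (a₁ := ⟨_, ha'⟩) (a₂ := ⟨_, hab⟩) rfl
  · rintro ⟨⟨a, b⟩, hab⟩ ⟨⟨a', b'⟩, hab'⟩ (rfl : b = b')
    simp [(h b).unique hab hab']
  · intro b
    obtain ⟨a, ha, -⟩ := h b
    exact ⟨⟨_, ha⟩, rfl⟩

theorem Finset.card_toRight_eq_iff {α β : Type*} [Fintype β] (u : Finset (α ⊕ β)) :
    u.toRight.card = Fintype.card β ↔ ∀ b, Sum.inr b ∈ u := by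
  simp [Finset.card_eq_iff_eq_univ, Finset.eq_univ_iff_forall]

variable {n : ℕ} {F : Finset (Fin n × Fin n)} {S : Finset (↥F ⊕ ↥F)}

def bipLeftPairs (S : Finset (↥F ⊕ ↥F)) : Finset (Fin n × Fin n) :=
  S.toLeft.map (Embedding.subtype _)

theorem mem_bipLeftPairs {p : Fin n × Fin n} :
    p ∈ bipLeftPairs S ↔ ∃ h : p ∈ F, Sum.inl ⟨p, h⟩ ∈ S := by
  simp [bipLeftPairs]

theorem card_bipLeftPairs_add_card_toRight : (bipLeftPairs S).card + S.toRight.card = S.card := by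
  rw [bipLeftPairs, Finset.card_map, Finset.card_toLeft_add_card_toRight]

theorem bipEdge_injective : Injective (bipEdge F) := by
  rintro (e|e) (f|f) h <;> simp only [bipEdge, Sym2.eq_iff, Sum.inl.injEq, Sum.inr.injEq,
    reduceCtorEq, and_false, false_or, or_false] at h
  · exact congrArg _ h.2
  · obtain ⟨h, rfl⟩ := h
    exact absurd h Fin.castSucc_lt_succ.ne
  · obtain ⟨rfl, h⟩ := h
    exact absurd h Fin.castSucc_lt_succ.ne'
  · exact congrArg _ h.1

theorem bipSubgraph_edgeSet : (bipSubgraph F S).edgeSet = bipEdge F '' S := by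
  rw [bipSubgraph, SimpleGraph.edgeSet_fromEdgeSet, sdiff_eq_left, Set.disjoint_left]
  rintro _ ⟨(e|e), -, rfl⟩ <;> simp [bipEdge]

theorem bipSubgraph_adj {a b : Fin (n + 1) ⊕ ↥F} :
    (bipSubgraph F S).Adj a b ↔ ∃ x ∈ S, bipEdge F x = s(a, b) := by
  rw [← SimpleGraph.mem_edgeSet, bipSubgraph_edgeSet]
  rfl

theorem nat_card_bipSubgraph_edgeSet : Nat.card (bipSubgraph F S).edgeSet = S.card := by
  rw [bipSubgraph_edgeSet, Nat.card_image_of_injective bipEdge_injective, Nat.card_coe_set_eq,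
    Set.ncard_coe_finset]

theorem principalMinor_bipMatrix_ne_zero_iff :
    principalMinor (bipMatrix F) S ≠ 0 ↔ Injective (fun p : bipLeftPairs S => p.1.2) := by
  classical
  constructor
  · intro hdet ⟨p, hp⟩ ⟨q, hq⟩ (hpq : p.2 = q.2)
    obtain ⟨hpF, hpS⟩ := mem_bipLeftPairs.1 hp
    obtain ⟨hqF, hqS⟩ := mem_bipLeftPairs.1 hq
    by_contra hne
    refine hdet (Matrix.det_zero_of_row_eq (i := ⟨_, hpS⟩) (j := ⟨_, hqS⟩) ?_ ?_)
    · simpa using hne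
    · funext q
      rcases q with ⟨f | f, -⟩ <;> simp [bipMatrix, hpq]
  · intro hinj
    suffices (bipMatrix F).submatrix (fun i : S => (i : ↥F ⊕ ↥F)) (fun i : S => (i : ↥F ⊕ ↥F))
        = 1 by
      simp [principalMinor, this]
    ext ⟨x, hx⟩ ⟨y, hy⟩
    rcases x with e₁ | e₁ <;> rcases y with e₂ | e₂
    · simp only [bipMatrix, Matrix.submatrix_apply, Matrix.of_apply, Matrix.one_apply,
        Subtype.mk.injEq, Sum.inl.injEq]
      refine if_congr ⟨fun h => ?_, fun h => h ▸ rfl⟩ rfl rfl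
      simpa using @hinj ⟨e₁, mem_bipLeftPairs.2 ⟨_, hx⟩⟩ ⟨e₂, mem_bipLeftPairs.2 ⟨_, hy⟩⟩ h
    all_goals simp [bipMatrix, Matrix.one_apply]

theorem surjective_fst_of_connected_bipSubgraph (h : (bipSubgraph F S).Connected) :
    Surjective (fun p : bipLeftPairs S => p.1.1) := by
  intro i
  by_contra! hi
  -- with no left edge in layer `i`, no edge crosses the cut between `u_i` and `u_{i+1}`
  let P : Fin (n + 1) ⊕ ↥F → Prop := Sum.elim (· ≤ i.castSucc) (fun e => e.1.1 < i)
  have hP : ∀ a b, (bipSubgraph F S).Adj a b → (P a ↔ P b) := by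
    intro a b hab
    obtain ⟨x, hx, hxab⟩ := bipSubgraph_adj.1 hab
    have hxi : ∀ e, x = Sum.inl e → e.1.1 ≠ i := by
      rintro e rfl
      exact hi ⟨e, mem_bipLeftPairs.2 ⟨e.2, hx⟩⟩
    rcases x with e | e <;> rcases Sym2.eq_iff.1 hxab with ⟨rfl, rfl⟩ | ⟨rfl, rfl⟩
    all_goals simp [P, Fin.ext_iff] at hxi ⊢ <;> omega
  obtain ⟨w⟩ := h.preconnected (Sum.inl 0) (Sum.inl i.succ)
  obtain ⟨d, -, hd₁, hd₂⟩ := w.exists_boundary_dart {v | P v} (by simp [P]) (by simp [P])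
  exact hd₂ ((hP _ _ d.adj).1 hd₁)

theorem connected_bipSubgraph (hR : ∀ e, Sum.inr e ∈ S)
    (hL : Surjective (fun p : bipLeftPairs S => p.1.1)) : (bipSubgraph F S).Connected := by
  have right_adj (e : ↥F) : (bipSubgraph F S).Adj (Sum.inr e) (Sum.inl e.1.1.succ) :=
    bipSubgraph_adj.2 ⟨_, hR e, rfl⟩
  have reach_layer (i : Fin (n + 1)) : (bipSubgraph F S).Reachable (Sum.inl 0) (Sum.inl i) := by
    induction i using Fin.induction with
    | zero => rfl
    | succ i ih =>
      obtain ⟨⟨p, hp⟩, rfl⟩ := hL i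
      obtain ⟨hpF, hpS⟩ := mem_bipLeftPairs.1 hp
      have left_adj : (bipSubgraph F S).Adj (Sum.inl p.1.castSucc) (Sum.inr ⟨p, hpF⟩) :=
        bipSubgraph_adj.2 ⟨_, hpS, rfl⟩
      exact ih.trans (left_adj.reachable.trans (right_adj _).reachable)
  have reach (v : Fin (n + 1) ⊕ ↥F) : (bipSubgraph F S).Reachable (Sum.inl 0) v := by
    rcases v with i | e
    · exact reach_layer i
    · exact (reach_layer _).trans (right_adj e).reachable.symm
  exact ⟨fun a b => (reach a).symm.trans (reach b)⟩

theorem isTree_bipSubgraph_iff :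
    (bipSubgraph F S).IsTree ↔ (bipSubgraph F S).Connected ∧ S.card = n + F.card := by
  rw [SimpleGraph.isTree_iff_connected_and_card, nat_card_bipSubgraph_edgeSet]
  simp only [Nat.card_eq_fintype_card, Fintype.card_sum, Fintype.card_fin, Fintype.card_coe]
  exact and_congr_right fun _ => by omega

theorem bip_spanningTree_iff_perfectMatching_general {n : ℕ}
    (F : Finset (Fin n × Fin n)) (S : Finset (↥F ⊕ ↥F)) :
    (principalMinor (bipMatrix F) S ≠ 0 ∧ (bipSubgraph F S).IsTree) ↔
      ((∀ e : ↥F, Sum.inr e ∈ S) ∧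
        (∀ i : Fin n, ∃! j : Fin n, ∃ h : (i, j) ∈ F, Sum.inl (⟨(i, j), h⟩ : ↥F) ∈ S) ∧
        (∀ j : Fin n, ∃! i : Fin n, ∃ h : (i, j) ∈ F, Sum.inl (⟨(i, j), h⟩ : ↥F) ∈ S)) := by
  simp only [← mem_bipLeftPairs]
  rw [← bijective_fst_iff_existsUnique, ← bijective_snd_iff_existsUnique,
    Fintype.bijective_iff_surjective_and_card, Fintype.bijective_iff_injective_and_card,
    principalMinor_bipMatrix_ne_zero_iff, isTree_bipSubgraph_iff]
  simp only [Fintype.card_coe, Fintype.card_fin]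
  have hsplit : (bipLeftPairs S).card + S.toRight.card = S.card :=
    card_bipLeftPairs_add_card_toRight
  have hright : S.toRight.card ≤ F.card := by simpa using S.toRight.card_le_univ
  have hall_right : S.toRight.card = F.card ↔ ∀ e : ↥F, Sum.inr e ∈ S := by
    rw [← Finset.card_toRight_eq_iff, Fintype.card_coe]
  constructor
  · rintro ⟨hinj, hconn, hS⟩
    have hsurj := surjective_fst_of_connected_bipSubgraph hconn
    have hle := Fintype.card_le_of_injective _ hinj
    have hge := Fintype.card_le_of_surjective _ hsurj
    simp only [Fintype.card_coe, Fintype.card_fin] at hle hge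
    exact ⟨hall_right.1 (by omega), ⟨hsurj, by omega⟩, hinj, by omega⟩
  · rintro ⟨hR, ⟨hsurj, hL⟩, hinj, -⟩
    have := hall_right.2 hR
    exact ⟨hinj, connected_bipSubgraph hR hsurj, by omega⟩

/-- An index set `S ⊆ F ⊕ F` satisfies `det (A_S) ≠ 0` and induces a spanning tree of `G`
iff `S` contains all right edge indices and `{(i,j) ∈ F : Sum.inl (i,j) ∈ S}` is a perfect
matching of the bipartite graph `(U, W; F)`. -/
theorem bip_spanningTree_iff_perfectMatching {n : ℕ} (hn : 1 ≤ n)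
    (F : Finset (Fin n × Fin n)) (S : Finset (↥F ⊕ ↥F)) :
    (principalMinor (bipMatrix F) S ≠ 0 ∧ (bipSubgraph F S).IsTree) ↔
      ((∀ e : ↥F, Sum.inr e ∈ S) ∧
        (∀ i : Fin n, ∃! j : Fin n, ∃ h : (i, j) ∈ F, Sum.inl (⟨(i, j), h⟩ : ↥F) ∈ S) ∧
        (∀ j : Fin n, ∃! i : Fin n, ∃ h : (i, j) ∈ F, Sum.inl (⟨(i, j), h⟩ : ↥F) ∈ S)) :=
  bip_spanningTree_iff_perfectMatching_general F S
end

section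
/- With the partition construction of G and B: for every index set S ⊆ Fin m ⊕ Fin m containing all of E_r, S induces a spanning tree of G if and only if the set {j ∈ Fin m : Sum.inl j ∈ S} lies in 𝒞, i.e., meets every fiber P_i = g⁻¹(i) in exactly one element. -/
open scoped Classical

/-- The edge of the graph `G` associated with an edge index in `Fin m ⊕ Fin m`:
the left edge `{v_{g j}, w_{g j, j}}` and the right edge `{w_{g j, j}, v_{g j + 1}}`. -/
def partEdge {n m : ℕ} (g : Fin m → Fin n) : (Fin m ⊕ Fin m) → Sym2 (Fin (n + 1) ⊕ Fin m)
  | Sum.inl j => s(Sum.inl (g j).castSucc, Sum.inr j)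
  | Sum.inr j => s(Sum.inr j, Sum.inl (g j).succ)

/-- The spanning subgraph of `G` whose edges are those indexed by `S ⊆ Fin m ⊕ Fin m`. -/
def partSubgraph {n m : ℕ} (g : Fin m → Fin n) (S : Finset (Fin m ⊕ Fin m)) :
    SimpleGraph (Fin (n + 1) ⊕ Fin m) :=
  SimpleGraph.fromEdgeSet (partEdge g '' ↑S)

/-- The matrix `B` of the construction: the left-left block is `A`, the right-right block is
the identity, and the off-diagonal blocks vanish. -/
def matB {m : ℕ} (A : Matrix (Fin m) (Fin m) ℝ) :
    Matrix (Fin m ⊕ Fin m) (Fin m ⊕ Fin m) ℝ :=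
  Matrix.of fun p q =>
    match p, q with
    | Sum.inl j₁, Sum.inl j₂ => A j₁ j₂
    | Sum.inr j, Sum.inr j' => if j = j' then 1 else 0
    | _, _ => 0

/-- The set `E_ℓ` of left edge indices. -/
def leftIdx (m : ℕ) : Finset (Fin m ⊕ Fin m) := Finset.univ.image Sum.inl

/-- The set `E_r` of right edge indices. -/
def rightIdx (m : ℕ) : Finset (Fin m ⊕ Fin m) := Finset.univ.image Sum.inr

/-! Since `S` contains every right edge, the induced graph has `n + 1 + m` vertices and
`#{j | inl j ∈ S} + m` edges, so it is a tree iff it is connected and `{j | inl j ∈ S}` has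
exactly `n` elements. Connectivity forces this set to meet every fiber `P_i`, because only a
left edge over `P_i` joins `v_0, …, v_i` to `v_{i+1}`. Conversely, if it meets every fiber, the
paths `v_i — w_j — v_{i+1}` connect the spine and each `w_j` hangs off `v_{g j + 1}`. Finally a
set of `n` elements meeting all `n` fibers meets each of them exactly once. -/

open Finset SimpleGraph

theorem Finset.forall_existsUnique_iff_card_eq {α β : Type*} [Fintype β] [DecidableEq β]
    (T : Finset α) (f : α → β) :
    (∀ b, ∃! a, a ∈ T ∧ f a = b) ↔ (∀ b, ∃ a ∈ T, f a = b) ∧ #T = Fintype.card β := by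
  have image_eq_univ_iff : T.image f = univ ↔ ∀ b, ∃ a ∈ T, f a = b := by
    simp [eq_univ_iff_forall]
  constructor
  · intro h
    have hsurj b : ∃ a ∈ T, f a = b := (h b).exists
    have hinj : Set.InjOn f T := fun a ha a' ha' he => (h _).unique ⟨ha, rfl⟩ ⟨ha', he.symm⟩
    refine ⟨hsurj, ?_⟩
    rw [← card_image_of_injOn hinj, image_eq_univ_iff.2 hsurj, card_univ]
  · rintro ⟨hsurj, hT⟩ b
    have hinj : Set.InjOn f T :=
      card_image_iff.1 (by rw [image_eq_univ_iff.2 hsurj, card_univ, hT])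
    obtain ⟨a, ha, rfl⟩ := hsurj b
    exact ⟨a, ⟨ha, rfl⟩, fun a' ⟨ha', he⟩ => hinj ha' ha he⟩

section Construction

variable {n m : ℕ} {g : Fin m → Fin n} {S : Finset (Fin m ⊕ Fin m)}

lemma partEdge_injective (g : Fin m → Fin n) : Function.Injective (partEdge g) := by
  rintro (j | j) (j' | j') h <;>
    simp only [partEdge, Sym2.eq_iff, Sum.inl.injEq, Sum.inr.injEq, reduceCtorEq,
      and_false, or_false, false_or] at h
  · exact congrArg Sum.inl h.2
  · obtain ⟨h, rfl⟩ := h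
    exact absurd h Fin.castSucc_lt_succ.ne
  · obtain ⟨rfl, h⟩ := h
    exact absurd h.symm Fin.castSucc_lt_succ.ne
  · exact congrArg Sum.inr h.1

lemma not_isDiag_partEdge (g : Fin m → Fin n) (e : Fin m ⊕ Fin m) : ¬ (partEdge g e).IsDiag := by
  cases e <;> simp [partEdge]

lemma card_edgeSet_partSubgraph (g : Fin m → Fin n) (S : Finset (Fin m ⊕ Fin m)) :
    Nat.card (partSubgraph g S).edgeSet = #S := by
  have : (partSubgraph g S).edgeSet = partEdge g '' S := by
    rw [partSubgraph, edgeSet_fromEdgeSet, sdiff_eq_left]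
    exact Set.disjoint_left.2 (by rintro _ ⟨e, -, rfl⟩; exact not_isDiag_partEdge g e)
  rw [this, Nat.card_coe_set_eq, Set.ncard_image_of_injective _ (partEdge_injective g),
    Set.ncard_coe_finset]

lemma card_eq_card_toLeft_add (hS : rightIdx m ⊆ S) : #S = #S.toLeft + m := by
  have : S.toRight = univ := by
    ext j; simpa using hS (mem_image_of_mem Sum.inr (mem_univ j))
  rw [← card_toLeft_add_card_toRight, this, card_univ, Fintype.card_fin]

lemma partSubgraph_adj_of_inl_mem {j : Fin m} (hj : Sum.inl j ∈ S) :
    (partSubgraph g S).Adj (Sum.inl (g j).castSucc) (Sum.inr j) :=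
  (fromEdgeSet_adj _).2 ⟨⟨_, hj, rfl⟩, by simp⟩

lemma partSubgraph_adj_of_inr_mem {j : Fin m} (hj : Sum.inr j ∈ S) :
    (partSubgraph g S).Adj (Sum.inr j) (Sum.inl (g j).succ) :=
  (fromEdgeSet_adj _).2 ⟨⟨_, hj, rfl⟩, by simp⟩

lemma partSubgraph_connected (hS : rightIdx m ⊆ S) (h : ∀ i, ∃ j, Sum.inl j ∈ S ∧ g j = i) :
    (partSubgraph g S).Connected := by
  have hinr : ∀ j, Sum.inr j ∈ S := fun j => hS (mem_image_of_mem _ (mem_univ j))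
  have hspine : ∀ k, (partSubgraph g S).Reachable (Sum.inl 0) (Sum.inl k) := by
    intro k
    induction k using Fin.induction with
    | zero => rfl
    | succ i ih =>
      obtain ⟨j, hj, rfl⟩ := h i
      exact ih.trans ((partSubgraph_adj_of_inl_mem hj).reachable.trans
        (partSubgraph_adj_of_inr_mem (hinr j)).reachable)
  have hall : ∀ x, (partSubgraph g S).Reachable (Sum.inl 0) x := by
    rintro (k | j)
    · exact hspine k
    · exact (hspine _).trans (partSubgraph_adj_of_inr_mem (hinr j)).reachable.symm
  exact (connected_iff _).2 ⟨fun u v => (hall u).symm.trans (hall v), ⟨Sum.inl 0⟩⟩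

def belowFiber (g : Fin m → Fin n) (i : Fin n) : Set (Fin (n + 1) ⊕ Fin m) :=
  {x | Sum.elim (fun k : Fin (n + 1) => (k : ℕ) ≤ i) (fun j => (g j : ℕ) < i) x}

lemma exists_eq_inl_of_partEdge_crosses {i : Fin n} {e : Fin m ⊕ Fin m}
    {a b : Fin (n + 1) ⊕ Fin m} (h : s(a, b) = partEdge g e)
    (ha : a ∈ belowFiber g i) (hb : b ∉ belowFiber g i) : ∃ j, e = Sum.inl j ∧ g j = i := by
  rcases e with j | j <;> simp only [partEdge, Sym2.eq_iff] at h <;>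
    rcases h with ⟨rfl, rfl⟩ | ⟨rfl, rfl⟩ <;>
    simp only [belowFiber, Set.mem_ofPred_eq, Sum.elim_inl, Sum.elim_inr, Fin.val_castSucc,
      Fin.val_succ, not_le, not_lt] at ha hb
  · exact ⟨j, rfl, Fin.ext (by omega)⟩
  all_goals omega

lemma exists_inl_mem_of_connected (h : (partSubgraph g S).Connected) (i : Fin n) :
    ∃ j, Sum.inl j ∈ S ∧ g j = i := by
  obtain ⟨p⟩ := h.preconnected (Sum.inl 0) (Sum.inl i.succ)
  obtain ⟨d, -, hd, hd'⟩ :=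
    p.exists_boundary_dart (belowFiber g i) (by simp [belowFiber]) (by simp [belowFiber])
  obtain ⟨⟨e, he, hde⟩, -⟩ := (fromEdgeSet_adj _).1 d.adj
  obtain ⟨j, rfl, rfl⟩ := exists_eq_inl_of_partEdge_crosses hde.symm hd hd'
  exact ⟨j, he, rfl⟩

end Construction

theorem part_spanningTree_iff_transversal_general {n m : ℕ}
    (g : Fin m → Fin n)
    (S : Finset (Fin m ⊕ Fin m)) (hS : rightIdx m ⊆ S) :
    (partSubgraph g S).IsTree ↔
      ∀ i : Fin n, ∃! j : Fin m, Sum.inl j ∈ S ∧ g j = i := by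
  have hcard : Nat.card (partSubgraph g S).edgeSet + 1 = Nat.card (Fin (n + 1) ⊕ Fin m) ↔
      #S.toLeft = n := by
    rw [card_edgeSet_partSubgraph, card_eq_card_toLeft_add hS, Nat.card_eq_fintype_card,
      Fintype.card_sum, Fintype.card_fin, Fintype.card_fin]
    omega
  have htransversal := forall_existsUnique_iff_card_eq S.toLeft g
  simp only [mem_toLeft, Fintype.card_fin] at htransversal
  rw [isTree_iff_connected_and_card, hcard, htransversal]
  exact ⟨fun ⟨h, hc⟩ => ⟨exists_inl_mem_of_connected h, hc⟩,
    fun ⟨h, hc⟩ => ⟨partSubgraph_connected hS h, hc⟩⟩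

/-- For the partition construction: if `S` contains all right edge indices, then `S` induces
a spanning tree of `G` iff `{j : Sum.inl j ∈ S}` meets every fiber `P_i = g⁻¹(i)` in exactly
one element. -/
theorem part_spanningTree_iff_transversal {n m : ℕ} (hn : 1 ≤ n) (hm : 1 ≤ m)
    (g : Fin m → Fin n) (hg : Function.Surjective g)
    (S : Finset (Fin m ⊕ Fin m)) (hS : rightIdx m ⊆ S) :
    (partSubgraph g S).IsTree ↔
      ∀ i : Fin n, ∃! j : Fin m, Sum.inl j ∈ S ∧ g j = i :=
  part_spanningTree_iff_transversal_general g S hS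
end

section
/- With the partition construction of G and B: for every index set S ⊆ Fin m ⊕ Fin m containing all of E_r, [S induces a forest of G and |S ∩ E_ℓ| = n] if and only if the set {j ∈ Fin m : Sum.inl j ∈ S} lies in 𝒞, i.e., meets every fiber P_i = g⁻¹(i) in exactly one element. -/
open scoped Classical

/-! Give `v_i` height `2i` and `w_j` height `2 g(j) + 1`, so that every edge climbs by one.
A graph in which every vertex has at most one neighbour above it is a forest: the lowest vertex
of a cycle would have two. Here the upward neighbour of `v_i` is unique exactly when at most one
chosen left edge lies in the fiber `P_i`, while two chosen left edges `j ≠ j'` in `P_i` close the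
4-cycle `v_i w_j v_{i+1} w_{j'}`. Hence `S` induces a forest iff `g` is injective on the chosen
left edges, and together with `|S ∩ E_ℓ| = n` this makes `g` a bijection from them onto `Fin n`.
-/

namespace SimpleGraph

variable {V : Type*} {G : SimpleGraph V}

theorem isAcyclic_of_upward_adj_unique {α : Type*} [LinearOrder α] (f : V → α)
    (hf : ∀ ⦃a b⦄, G.Adj a b → f a ≠ f b)
    (hup : ∀ ⦃v a b⦄, G.Adj v a → G.Adj v b → f v < f a → f v < f b → a = b) :
    G.IsAcyclic := by
  intro v c hc
  obtain ⟨u, hu, hmin⟩ := c.support.toFinset.exists_min_image f ⟨v, by simp⟩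
  rw [List.mem_toFinset] at hu
  set c' := c.rotate u hu
  have hc' : c'.IsCycle := hc.rotate hu
  have hlow : ∀ w ∈ c'.support, f u ≤ f w := fun w hw => hmin w (by simpa [c'] using hw)
  have hsnd := c'.adj_snd hc'.not_nil
  have hpen := (c'.adj_penultimate hc'.not_nil).symm
  exact hc'.snd_ne_penultimate <| hup hsnd hpen
    ((hlow _ (c'.getVert_mem_support _)).lt_of_ne (hf hsnd))
    ((hlow _ (c'.getVert_mem_support _)).lt_of_ne (hf hpen))

theorem IsAcyclic.subsingleton_commonNeighbors (hG : G.IsAcyclic) {u w : V} (huw : u ≠ w) :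
    (G.commonNeighbors u w).Subsingleton := by
  intro v₁ hv₁ v₂ hv₂
  rw [mem_commonNeighbors] at hv₁ hv₂
  let p (v : V) (huv : G.Adj u v) (hwv : G.Adj w v) : G.Path u w :=
    ⟨.cons huv (.cons hwv.symm .nil), by simp [huv.ne, hwv.ne.symm, huw]⟩
  have := (hG.subsingleton_path u w).elim (p v₁ hv₁.1 hv₁.2) (p v₂ hv₂.1 hv₂.2)
  simpa [p] using congrArg (fun q : G.Path u w => q.1.snd) this

end SimpleGraph

theorem Finset.injOn_and_card_eq_iff_existsUnique {α β : Type*} [DecidableEq β] [Fintype β]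
    (g : α → β) (T : Finset α) :
    (Set.InjOn g T ∧ T.card = Fintype.card β) ↔ ∀ b, ∃! a, a ∈ T ∧ g a = b := by
  constructor
  · rintro ⟨hinj, hcard⟩ b
    have himage : T.image g = univ :=
      eq_univ_of_card _ ((card_image_of_injOn hinj).trans hcard)
    obtain ⟨a, ha, rfl⟩ := mem_image.1 (himage ▸ mem_univ b)
    exact ⟨a, ⟨ha, rfl⟩, fun a' ⟨ha', heq⟩ => hinj ha' ha heq⟩
  · intro h
    have hinj : Set.InjOn g T := fun a ha a' ha' heq => (h (g a')).unique ⟨ha, heq⟩ ⟨ha', rfl⟩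
    refine ⟨hinj, ?_⟩
    rw [← card_image_of_injOn hinj, ← card_univ]
    congr
    exact eq_univ_of_forall fun b => by
      obtain ⟨a, ⟨ha, rfl⟩, -⟩ := h b
      exact mem_image_of_mem g ha

section PartitionGraph

open SimpleGraph

variable {n m : ℕ} (g : Fin m → Fin n)

def partTail : Fin m ⊕ Fin m → Fin (n + 1) ⊕ Fin m
  | .inl j => .inl (g j).castSucc
  | .inr j => .inr j

def partHead : Fin m ⊕ Fin m → Fin (n + 1) ⊕ Fin m
  | .inl j => .inr j
  | .inr j => .inl (g j).succ

def partHeight : Fin (n + 1) ⊕ Fin m → ℕ :=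
  Sum.elim (fun i => 2 * i) (fun j => 2 * g j + 1)

lemma partEdge_eq (e : Fin m ⊕ Fin m) : partEdge g e = s(partTail g e, partHead g e) := by
  cases e <;> rfl

lemma partHeight_tail_lt_head (e : Fin m ⊕ Fin m) :
    partHeight g (partTail g e) < partHeight g (partHead g e) := by
  cases e <;> simp only [partHeight, partTail, partHead, Sum.elim_inl, Sum.elim_inr,
    Fin.val_castSucc, Fin.val_succ] <;> omega

variable {g} (S : Finset (Fin m ⊕ Fin m))

lemma partSubgraph_adj {x y : Fin (n + 1) ⊕ Fin m} :
    (partSubgraph g S).Adj x y ↔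
      ∃ e ∈ S, partTail g e = x ∧ partHead g e = y ∨ partTail g e = y ∧ partHead g e = x := by
  simp only [partSubgraph, fromEdgeSet_adj, Set.mem_image, Finset.mem_coe, partEdge_eq,
    Sym2.eq_iff]
  refine ⟨And.left, fun h => ⟨h, ?_⟩⟩
  rintro rfl
  obtain ⟨e, -, ⟨he₁, he₂⟩ | ⟨he₁, he₂⟩⟩ := h <;>
  · have := partHeight_tail_lt_head g e
    rw [he₁, he₂] at this
    exact this.false

lemma partSubgraph_adj_tail_head {e : Fin m ⊕ Fin m} (he : e ∈ S) :
    (partSubgraph g S).Adj (partTail g e) (partHead g e) :=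
  (partSubgraph_adj S).2 ⟨e, he, .inl ⟨rfl, rfl⟩⟩

lemma partTail_injOn (hinj : Set.InjOn g S.toLeft) : Set.InjOn (partTail g) S := by
  rintro (j₁ | j₁) h₁ (j₂ | j₂) h₂ heq <;> simp only [partTail, Sum.inl.injEq, Sum.inr.injEq,
    reduceCtorEq, Fin.castSucc_inj] at heq
  · exact congrArg Sum.inl (hinj (by simpa using h₁) (by simpa using h₂) heq)
  · exact congrArg Sum.inr heq

theorem partSubgraph_isAcyclic_of_injOn (hinj : Set.InjOn g S.toLeft) :
    (partSubgraph g S).IsAcyclic := by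
  refine isAcyclic_of_upward_adj_unique (partHeight g) (fun x y hxy => ?_) ?_
  · obtain ⟨e, -, ⟨rfl, rfl⟩ | ⟨rfl, rfl⟩⟩ := (partSubgraph_adj S).1 hxy
    exacts [(partHeight_tail_lt_head g e).ne, (partHeight_tail_lt_head g e).ne']
  · have upward : ∀ ⦃v a⦄, (partSubgraph g S).Adj v a → partHeight g v < partHeight g a →
        ∃ e ∈ S, partTail g e = v ∧ partHead g e = a := by
      intro v a hva hlt
      obtain ⟨e, he, h | ⟨rfl, rfl⟩⟩ := (partSubgraph_adj S).1 hva
      · exact ⟨e, he, h⟩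
      · exact absurd (partHeight_tail_lt_head g e) hlt.not_gt
    intro v a b hva hvb hlta hltb
    obtain ⟨e₁, he₁, rfl, rfl⟩ := upward hva hlta
    obtain ⟨e₂, he₂, htail, rfl⟩ := upward hvb hltb
    rw [partTail_injOn S hinj he₁ he₂ htail.symm]

theorem injOn_of_partSubgraph_isAcyclic (hS : rightIdx m ⊆ S)
    (hG : (partSubgraph g S).IsAcyclic) : Set.InjOn g S.toLeft := by
  intro j₁ h₁ j₂ h₂ heq
  have hcommon : ∀ j, g j = g j₁ → Sum.inl j ∈ S →
      Sum.inr j ∈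
        (partSubgraph g S).commonNeighbors (.inl (g j₁).castSucc) (.inl (g j₁).succ) := by
    intro j hj hjS
    rw [mem_commonNeighbors, ← hj]
    exact ⟨partSubgraph_adj_tail_head S hjS,
      (partSubgraph_adj_tail_head S (hS (by simp [rightIdx]) : Sum.inr j ∈ S)).symm⟩
  have hne : (Sum.inl (g j₁).castSucc : Fin (n + 1) ⊕ Fin m) ≠ .inl (g j₁).succ := by
    simpa using Fin.castSucc_lt_succ.ne
  exact Sum.inr_injective <| hG.subsingleton_commonNeighbors hne
    (hcommon j₁ rfl (by simpa using h₁)) (hcommon j₂ heq.symm (by simpa using h₂))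

theorem partSubgraph_isAcyclic_iff (hS : rightIdx m ⊆ S) :
    (partSubgraph g S).IsAcyclic ↔ Set.InjOn g S.toLeft :=
  ⟨injOn_of_partSubgraph_isAcyclic S hS, partSubgraph_isAcyclic_of_injOn S⟩

lemma card_inter_leftIdx : (S ∩ leftIdx m).card = S.toLeft.card := by
  have : S ∩ leftIdx m = S.toLeft.map .inl := by
    ext (j | j) <;> simp [leftIdx]
  rw [this, Finset.card_map]

end PartitionGraph

theorem part_forest_iff_transversal_general {n m : ℕ}
    (g : Fin m → Fin n)
    (S : Finset (Fin m ⊕ Fin m)) (hS : rightIdx m ⊆ S) :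
    ((partSubgraph g S).IsAcyclic ∧ (S ∩ leftIdx m).card = n) ↔
      ∀ i : Fin n, ∃! j : Fin m, Sum.inl j ∈ S ∧ g j = i := by
  simpa [partSubgraph_isAcyclic_iff S hS, card_inter_leftIdx] using
    Finset.injOn_and_card_eq_iff_existsUnique g S.toLeft

/-- For the partition construction: if `S` contains all right edge indices, then `S` induces
a forest of `G` with `|S ∩ E_ℓ| = n` iff `{j : Sum.inl j ∈ S}` meets every fiber
`P_i = g⁻¹(i)` in exactly one element. -/
theorem part_forest_iff_transversal {n m : ℕ} (hn : 1 ≤ n) (hm : 1 ≤ m)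
    (g : Fin m → Fin n) (hg : Function.Surjective g)
    (S : Finset (Fin m ⊕ Fin m)) (hS : rightIdx m ⊆ S) :
    ((partSubgraph g S).IsAcyclic ∧ (S ∩ leftIdx m).card = n) ↔
      ∀ i : Fin n, ∃! j : Fin m, Sum.inl j ∈ S ∧ g j = i :=
  part_forest_iff_transversal_general g S hS
end
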